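/- Let T be a bounded linear operator on H admitting a reduced A-adjoint T^♯. Then (1/2)·√(‖T^♯T + TT^♯‖_A) ≤ (√2/2)·√(‖Re_A(T)‖_A² + ‖Im_A(T)‖_A²) ≤ ω_A(T). -/

import Mathlib

open ContinuousLinearMap

variable {H : Type*} [NormedAddCommGroup H] [InnerProductSpace ℂ H] [CompleteSpace H]

/-- The seminorm on `H` induced by a positive operator `A`: `‖x‖_A = √⟨Ax,x⟩`. -/
noncomputable def vnA (A : H →L[ℂ] H) (x : H) : ℝ :=
  Real.sqrt (RCLike.re (inner ℂ (A x) x : ℂ))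

/-- The `A`-seminorm of an operator: `‖X‖_A = sup {‖Xx‖_A : ‖x‖_A = 1}`. -/
noncomputable def opnA (A : H →L[ℂ] H) (X : H →L[ℂ] H) : ℝ :=
  sSup ((fun x => vnA A (X x)) '' {x : H | vnA A x = 1})

/-- The `A`-numerical radius: `ω_A(X) = sup {|⟨Xx,x⟩_A| : ‖x‖_A = 1}`. -/
noncomputable def wA (A : H →L[ℂ] H) (X : H →L[ℂ] H) : ℝ :=
  sSup ((fun x => ‖(inner ℂ (A (X x)) x : ℂ)‖) '' {x : H | vnA A x = 1})

/-- `S` is the reduced `A`-adjoint of `T`: `A ∘ S = T* ∘ A` and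
`range S ⊆ closure (range A)`. -/
def IsReducedAdjA (A T S : H →L[ℂ] H) : Prop :=
  A ∘L S = (ContinuousLinearMap.adjoint T) ∘L A ∧
    Set.range S ⊆ closure (Set.range (A : H → H))

/-- `X` is `A`-selfadjoint: `A ∘ X = X* ∘ A`. -/
def IsSelfAdjA (A X : H →L[ℂ] H) : Prop :=
  A ∘L X = (ContinuousLinearMap.adjoint X) ∘L A

/-- `Re_A(T) = (T + T♯)/2`. -/
noncomputable def ReA (T Ts : H →L[ℂ] H) : H →L[ℂ] H := (2 : ℂ)⁻¹ • (T + Ts)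

/-- `Im_A(T) = (T - T♯)/(2i)`. -/
noncomputable def ImA (T Ts : H →L[ℂ] H) : H →L[ℂ] H := (2 * Complex.I)⁻¹ • (T - Ts)

/-!
Writing `A = S²` with `S = A^{1/2}`, the seminorm is `‖x‖_A = ‖S x‖`, so it inherits the
triangle inequality, Cauchy–Schwarz and the parallelogram law. The operators `Re_A T` and
`Im_A T` are `A`-selfadjoint, and `T^♯T + TT^♯ = 2 (Re_A(T)² + Im_A(T)²)` gives the first
inequality. For the second, `‖R‖_A ≤ ω_A(R)` for `A`-selfadjoint `R` (polarization and the
parallelogram law), while `⟨Re_A(T) x, x⟩_A` and `⟨Im_A(T) x, x⟩_A` are, up to sign, the real and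
imaginary parts of `⟨T x, x⟩_A`, so `ω_A(Re_A T), ω_A(Im_A T) ≤ ω_A(T)`. The suprema involved are
finite because `A`-selfadjoint operators are `A`-bounded, by the power trick.
-/

lemma le_of_forall_pow_two_pow_le_mul {a b C : ℝ} (hb : 0 ≤ b)
    (h : ∀ n : ℕ, a ^ 2 ^ n ≤ C * b ^ 2 ^ n) : a ≤ b := by
  by_contra! hba
  have ha0 : 0 < a := hb.trans_lt hba
  have hlim : Filter.Tendsto (fun n : ℕ => C * (b / a) ^ 2 ^ n) Filter.atTop (nhds 0) := by
    simpa using ((tendsto_pow_atTop_nhds_zero_of_lt_one (div_nonneg hb ha0.le)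
      ((div_lt_one ha0).2 hba)).comp
      (tendsto_pow_atTop_atTop_of_one_lt one_lt_two)).const_mul C
  obtain ⟨n, hn⟩ := (hlim.eventually (gt_mem_nhds one_pos)).exists
  rw [div_pow, mul_div_assoc', div_lt_one (by positivity)] at hn
  exact (h n).not_gt hn

lemma half_mul_sqrt_le_of_le_two_mul {s t : ℝ} (h : s ≤ 2 * t) :
    1 / 2 * √s ≤ √2 / 2 * √t := by
  have := Real.sqrt_le_sqrt h
  rw [Real.sqrt_mul zero_le_two] at this
  linarith

lemma sqrt_two_div_two_mul_sqrt_sq_add_sq_le {a b w : ℝ} (ha : 0 ≤ a) (hb : 0 ≤ b)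
    (haw : a ≤ w) (hbw : b ≤ w) : √2 / 2 * √(a ^ 2 + b ^ 2) ≤ w := by
  have hw : 0 ≤ w := ha.trans haw
  have h : √(a ^ 2 + b ^ 2) ≤ √2 * w := by
    rw [← Real.sqrt_sq hw, ← Real.sqrt_mul zero_le_two]
    exact Real.sqrt_le_sqrt (by nlinarith)
  calc √2 / 2 * √(a ^ 2 + b ^ 2) ≤ √2 / 2 * (√2 * w) := by gcongr
    _ = w := by rw [← mul_assoc, div_mul_eq_mul_div, Real.mul_self_sqrt zero_le_two]; ring

section Seminorm

variable {A : H →L[ℂ] H}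

lemma inner_apply_eq_inner_sqrt (hA : A.IsPositive) (x y : H) :
    inner ℂ (A x) y = inner ℂ (CFC.sqrt A x) (CFC.sqrt A y) := by
  conv_lhs => rw [← CFC.sqrt_mul_sqrt_self A (nonneg_iff_isPositive A |>.mpr hA)]
  exact (CFC.sqrt_nonneg A).isSelfAdjoint.isSymmetric _ _

lemma vnA_eq_norm_sqrt (hA : A.IsPositive) (x : H) : vnA A x = ‖CFC.sqrt A x‖ := by
  rw [vnA, inner_apply_eq_inner_sqrt hA, inner_self_eq_norm_sq, Real.sqrt_sq (norm_nonneg _)]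

omit [CompleteSpace H] in
lemma vnA_nonneg (A : H →L[ℂ] H) (x : H) : 0 ≤ vnA A x := Real.sqrt_nonneg _

omit [CompleteSpace H] in
lemma vnA_sq (hA : A.IsPositive) (x : H) : vnA A x ^ 2 = RCLike.re (inner ℂ (A x) x) :=
  Real.sq_sqrt (hA.re_inner_nonneg_left x)

lemma vnA_smul (hA : A.IsPositive) (c : ℂ) (x : H) : vnA A (c • x) = ‖c‖ * vnA A x := by
  simp only [vnA_eq_norm_sqrt hA, map_smul, norm_smul]

lemma vnA_add_le (hA : A.IsPositive) (x y : H) : vnA A (x + y) ≤ vnA A x + vnA A y := by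
  simp only [vnA_eq_norm_sqrt hA, map_add]
  exact norm_add_le _ _

lemma vnA_le_norm_sqrt_mul (hA : A.IsPositive) (x : H) : vnA A x ≤ ‖CFC.sqrt A‖ * ‖x‖ := by
  rw [vnA_eq_norm_sqrt hA]
  exact le_opNorm _ _

lemma norm_inner_le_vnA_mul_vnA (hA : A.IsPositive) (x y : H) :
    ‖inner ℂ (A x) y‖ ≤ vnA A x * vnA A y := by
  rw [inner_apply_eq_inner_sqrt hA, vnA_eq_norm_sqrt hA, vnA_eq_norm_sqrt hA]
  exact norm_inner_le_norm _ _

lemma vnA_add_sq_add_vnA_sub_sq (hA : A.IsPositive) (x y : H) :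
    vnA A (x + y) ^ 2 + vnA A (x - y) ^ 2 = 2 * (vnA A x ^ 2 + vnA A y ^ 2) := by
  simp only [vnA_eq_norm_sqrt hA, map_add, map_sub]
  exact parallelogram_law_with_norm ℂ _ _

end Seminorm

section Supremum

variable {A X : H →L[ℂ] H}

omit [CompleteSpace H] in
lemma opnA_nonneg (A X : H →L[ℂ] H) : 0 ≤ opnA A X :=
  Real.sSup_nonneg (Set.forall_mem_image.2 fun x _ => vnA_nonneg A (X x))

omit [CompleteSpace H] in
lemma wA_nonneg (A X : H →L[ℂ] H) : 0 ≤ wA A X :=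
  Real.sSup_nonneg (Set.forall_mem_image.2 fun _ _ => norm_nonneg _)

omit [CompleteSpace H] in
lemma opnA_le {c : ℝ} (h : ∀ x, vnA A x = 1 → vnA A (X x) ≤ c) (hc : 0 ≤ c) : opnA A X ≤ c :=
  Real.sSup_le (Set.forall_mem_image.2 h) hc

omit [CompleteSpace H] in
lemma wA_le {c : ℝ} (h : ∀ x, vnA A x = 1 → ‖inner ℂ (A (X x)) x‖ ≤ c) (hc : 0 ≤ c) :
    wA A X ≤ c :=
  Real.sSup_le (Set.forall_mem_image.2 h) hc

lemma le_sSup_image_mul_vnA_pow (hA : A.IsPositive) {g : H → ℝ} {k : ℕ} {C : ℝ} (hk : k ≠ 0)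
    (hg : ∀ (c : ℂ) x, g (c • x) = ‖c‖ ^ k * g x) (hC : ∀ x, g x ≤ C * vnA A x ^ k) (x : H) :
    g x ≤ sSup (g '' {x | vnA A x = 1}) * vnA A x ^ k := by
  rcases (vnA_nonneg A x).eq_or_lt with h0 | h0
  · simpa [← h0, zero_pow hk] using hC x
  · have hbdd : BddAbove (g '' {x | vnA A x = 1}) :=
      ⟨C, Set.forall_mem_image.2 fun y (hy : vnA A y = 1) => by simpa [hy] using hC y⟩
    set y := ((vnA A x)⁻¹ : ℂ) • x
    have hy : vnA A y = 1 := by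
      rw [vnA_smul hA, norm_inv, Complex.norm_real, Real.norm_of_nonneg h0.le,
        inv_mul_cancel₀ h0.ne']
    have hgy : g x = vnA A x ^ k * g y := by
      rw [hg, norm_inv, Complex.norm_real, Real.norm_of_nonneg h0.le, inv_pow, ← mul_assoc,
        mul_inv_cancel₀ (pow_ne_zero _ h0.ne'), one_mul]
    rw [hgy, mul_comm (sSup _)]
    exact mul_le_mul_of_nonneg_left (le_csSup hbdd ⟨y, hy, rfl⟩) (by positivity)

lemma vnA_apply_le_opnA_mul (hA : A.IsPositive) {C : ℝ} (hX : ∀ x, vnA A (X x) ≤ C * vnA A x)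
    (x : H) : vnA A (X x) ≤ opnA A X * vnA A x := by
  simpa [opnA] using le_sSup_image_mul_vnA_pow hA (g := fun x => vnA A (X x)) one_ne_zero
    (fun c x => by simp only [map_smul, vnA_smul hA, pow_one]) (by simpa using hX) x

lemma norm_inner_le_wA_mul (hA : A.IsPositive) {C : ℝ} (hX : ∀ x, vnA A (X x) ≤ C * vnA A x)
    (x : H) : ‖inner ℂ (A (X x)) x‖ ≤ wA A X * vnA A x ^ 2 := by
  refine le_sSup_image_mul_vnA_pow hA (g := fun x => ‖inner ℂ (A (X x)) x‖) (C := C) two_ne_zero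
    (fun c x => ?_) (fun x => ?_) x
  · simp only [map_smul, inner_smul_left, inner_smul_right, norm_mul, RCLike.norm_conj]
    ring
  · calc ‖inner ℂ (A (X x)) x‖ ≤ vnA A (X x) * vnA A x := norm_inner_le_vnA_mul_vnA hA _ _
      _ ≤ C * vnA A x * vnA A x := mul_le_mul_of_nonneg_right (hX x) (vnA_nonneg A x)
      _ = C * vnA A x ^ 2 := by ring

lemma wA_le_wA_of_norm_inner_le (hA : A.IsPositive) {X Y : H →L[ℂ] H} {C : ℝ}
    (hY : ∀ x, vnA A (Y x) ≤ C * vnA A x)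
    (h : ∀ x, ‖inner ℂ (A (X x)) x‖ ≤ ‖inner ℂ (A (Y x)) x‖) : wA A X ≤ wA A Y :=
  wA_le (fun x hx => by simpa [hx] using (h x).trans (norm_inner_le_wA_mul hA hY x))
    (wA_nonneg A Y)

end Supremum

omit [CompleteSpace H] in
lemma inner_map_add_add_sub_inner_map_sub_sub (B : H →L[ℂ] H) (x y : H) :
    inner ℂ (B (x + y)) (x + y) - inner ℂ (B (x - y)) (x - y) =
      2 * (inner ℂ (B x) y + inner ℂ (B y) x) := by
  simp only [map_add, map_sub, inner_add_left, inner_add_right, inner_sub_left, inner_sub_right]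
  ring

namespace IsSelfAdjA

variable {A R : H →L[ℂ] H}

lemma inner_apply_left (hR : IsSelfAdjA A R) (x y : H) :
    inner ℂ (A (R x)) y = inner ℂ (A x) (R y) := by
  rw [← comp_apply, hR, comp_apply, adjoint_inner_left]

lemma pow (hR : IsSelfAdjA A R) (n : ℕ) : IsSelfAdjA A (R ^ n) := by
  -- `IsSelfAdjA A R` is definitionally `SemiconjBy A R (star R)`.
  have : SemiconjBy A (R ^ n) (star R ^ n) := SemiconjBy.pow_right hR n
  rwa [← star_pow] at this

lemma vnA_apply_sq_le (hA : A.IsPositive) (hR : IsSelfAdjA A R) (x : H) :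
    vnA A (R x) ^ 2 ≤ vnA A x * vnA A (R (R x)) := by
  rw [vnA_sq hA, hR.inner_apply_left]
  exact (RCLike.re_le_norm _).trans (norm_inner_le_vnA_mul_vnA hA _ _)

lemma vnA_apply_pow_two_pow_le (hA : A.IsPositive) (hR : IsSelfAdjA A R) (x : H) (n : ℕ) :
    vnA A (R x) ^ 2 ^ n ≤ vnA A x ^ (2 ^ n - 1) * vnA A ((R ^ 2 ^ n) x) := by
  induction n with
  | zero => simp
  | succ n ih =>
    have hstep : vnA A ((R ^ 2 ^ n) x) ^ 2 ≤ vnA A x * vnA A ((R ^ 2 ^ (n + 1)) x) := by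
      simpa [pow_succ, pow_mul, sq] using (hR.pow (2 ^ n)).vnA_apply_sq_le hA x
    have hexp : (2 ^ n - 1) * 2 + 1 = 2 ^ (n + 1) - 1 := by
      have := Nat.one_le_two_pow (n := n)
      rw [pow_succ]; omega
    calc vnA A (R x) ^ 2 ^ (n + 1) = (vnA A (R x) ^ 2 ^ n) ^ 2 := by rw [pow_succ, pow_mul]
      _ ≤ (vnA A x ^ (2 ^ n - 1) * vnA A ((R ^ 2 ^ n) x)) ^ 2 := by
        gcongr; exact pow_nonneg (vnA_nonneg A _) _
      _ = (vnA A x ^ (2 ^ n - 1)) ^ 2 * vnA A ((R ^ 2 ^ n) x) ^ 2 := mul_pow _ _ _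
      _ ≤ (vnA A x ^ (2 ^ n - 1)) ^ 2 * (vnA A x * vnA A ((R ^ 2 ^ (n + 1)) x)) := by gcongr
      _ = vnA A x ^ (2 ^ (n + 1) - 1) * vnA A ((R ^ 2 ^ (n + 1)) x) := by
        rw [← hexp]; ring

/-- The power trick: the constant `‖A^{1/2}‖ ‖x‖ / ‖x‖_A` in front of `(‖R‖ ‖x‖_A) ^ 2^n`
disappears under `2^n`-th roots. -/
lemma vnA_apply_le (hA : A.IsPositive) (hR : IsSelfAdjA A R) (x : H) :
    vnA A (R x) ≤ ‖R‖ * vnA A x := by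
  rcases (vnA_nonneg A x).eq_or_lt with h0 | h0
  · have := hR.vnA_apply_sq_le hA x
    rw [← h0, zero_mul] at this
    rw [← h0, mul_zero]
    exact pow_eq_zero_iff two_ne_zero |>.1 (le_antisymm this (sq_nonneg _)) |>.le
  set m := vnA A x
  refine le_of_forall_pow_two_pow_le_mul (C := ‖CFC.sqrt A‖ * ‖x‖ / m) (by positivity)
    fun n => ?_
  have hm : m ^ (2 ^ n - 1) = m ^ 2 ^ n / m := by
    rw [eq_div_iff h0.ne', ← pow_succ, Nat.sub_add_cancel Nat.one_le_two_pow]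
  calc vnA A (R x) ^ 2 ^ n ≤ m ^ (2 ^ n - 1) * vnA A ((R ^ 2 ^ n) x) :=
        hR.vnA_apply_pow_two_pow_le hA x n
    _ ≤ m ^ (2 ^ n - 1) * (‖CFC.sqrt A‖ * (‖R‖ ^ 2 ^ n * ‖x‖)) := by
        gcongr
        refine (vnA_le_norm_sqrt_mul hA _).trans (mul_le_mul_of_nonneg_left ?_ (norm_nonneg _))
        exact (le_opNorm _ _).trans
          (mul_le_mul_of_nonneg_right (norm_pow_le' _ (by positivity)) (norm_nonneg _))
    _ = ‖CFC.sqrt A‖ * ‖x‖ / m * (‖R‖ * m) ^ 2 ^ n := by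
        rw [hm, mul_pow]; ring

lemma inner_apply_comm (hA : A.IsPositive) (hR : IsSelfAdjA A R) (x y : H) :
    inner ℂ (A (R y)) x = starRingEnd ℂ (inner ℂ (A (R x)) y) := by
  rw [hR.inner_apply_left, inner_conj_symm]
  exact hA.isSelfAdjoint.isSymmetric _ _

lemma two_mul_re_inner_le (hA : A.IsPositive) (hR : IsSelfAdjA A R) (x y : H) :
    2 * RCLike.re (inner ℂ (A (R x)) y) ≤ wA A R * (vnA A x ^ 2 + vnA A y ^ 2) := by
  have hbdd := hR.vnA_apply_le hA
  have hpol := congrArg RCLike.re (inner_map_add_add_sub_inner_map_sub_sub (A ∘L R) x y)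
  simp only [comp_apply] at hpol
  rw [hR.inner_apply_comm hA x y, map_sub] at hpol
  simp only [RCLike.add_conj, RCLike.ofNat_mul_re, RCLike.ofReal_re] at hpol
  have hp := (RCLike.re_le_norm _).trans (norm_inner_le_wA_mul hA hbdd (x + y))
  have hm := (neg_le_abs _).trans <|
    (RCLike.abs_re_le_norm _).trans (norm_inner_le_wA_mul hA hbdd (x - y))
  have hsum : wA A R * vnA A (x + y) ^ 2 + wA A R * vnA A (x - y) ^ 2 =
      2 * (wA A R * (vnA A x ^ 2 + vnA A y ^ 2)) := by
    rw [← mul_add, vnA_add_sq_add_vnA_sub_sq hA]; ring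
  linarith

lemma opnA_le_wA (hA : A.IsPositive) (hR : IsSelfAdjA A R) : opnA A R ≤ wA A R := by
  refine opnA_le (fun x hx => ?_) (wA_nonneg A R)
  rcases (vnA_nonneg A (R x)).eq_or_lt with h0 | h0
  · exact h0 ▸ wA_nonneg A R
  set r := vnA A (R x)
  have hy : vnA A ((r⁻¹ : ℂ) • R x) = 1 := by
    rw [vnA_smul hA, norm_inv, Complex.norm_real, Real.norm_of_nonneg h0.le,
      inv_mul_cancel₀ h0.ne']
  have hre : RCLike.re (inner ℂ (A (R x)) ((r⁻¹ : ℂ) • R x)) = r := by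
    have hsq : RCLike.re (inner ℂ (A (R x)) (R x)) = r ^ 2 := (vnA_sq hA _).symm
    simp only [inner_smul_right, ← Complex.ofReal_inv, RCLike.re_to_complex,
      Complex.re_ofReal_mul] at hsq ⊢
    rw [hsq]
    field_simp
  have := hR.two_mul_re_inner_le hA x ((r⁻¹ : ℂ) • R x)
  rw [hre, hx, hy] at this
  linarith

end IsSelfAdjA

omit [CompleteSpace H] in
lemma comp_add_comp_eq_two_smul (T Ts : H →L[ℂ] H) :
    Ts ∘L T + T ∘L Ts = (2 : ℂ) • (ReA T Ts ∘L ReA T Ts + ImA T Ts ∘L ImA T Ts) := by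
  simp only [ReA, ImA, comp_smul, smul_comp, add_comp, comp_add, sub_comp, comp_sub]
  match_scalars <;> field_simp <;> simp [Complex.I_sq] <;> ring

omit [CompleteSpace H] in
lemma reA_add_I_smul_imA (T Ts : H →L[ℂ] H) : ReA T Ts + Complex.I • ImA T Ts = T := by
  have hI : Complex.I * (2 * Complex.I)⁻¹ = (2 : ℂ)⁻¹ := by field_simp
  simp only [ReA, ImA, smul_smul, hI]
  module

namespace IsReducedAdjA

variable {A T Ts : H →L[ℂ] H}

lemma adjoint_comp_eq (hA : A.IsPositive) (hTs : IsReducedAdjA A T Ts) :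
    adjoint Ts ∘L A = A ∘L T := by
  simpa [adjoint_comp, hA.isSelfAdjoint.adjoint_eq] using congrArg adjoint hTs.1

lemma inner_apply (hA : A.IsPositive) (hTs : IsReducedAdjA A T Ts) (x : H) :
    inner ℂ (A (Ts x)) x = starRingEnd ℂ (inner ℂ (A (T x)) x) := by
  rw [← comp_apply, hTs.1, comp_apply, adjoint_inner_left, inner_conj_symm]
  exact hA.isSelfAdjoint.isSymmetric _ _

lemma isSelfAdjA_reA (hA : A.IsPositive) (hTs : IsReducedAdjA A T Ts) :
    IsSelfAdjA A (ReA T Ts) := by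
  have hstar : adjoint (ReA T Ts) = (2 : ℂ)⁻¹ • (adjoint T + adjoint Ts) := by
    simp [ReA, ← star_eq_adjoint, star_smul]
  rw [IsSelfAdjA, hstar, ReA, comp_smul, smul_comp, comp_add, add_comp, hTs.1,
    hTs.adjoint_comp_eq hA, add_comm]

lemma isSelfAdjA_imA (hA : A.IsPositive) (hTs : IsReducedAdjA A T Ts) :
    IsSelfAdjA A (ImA T Ts) := by
  have hstar : adjoint (ImA T Ts) = -(2 * Complex.I)⁻¹ • (adjoint T - adjoint Ts) := by
    simp [ImA, ← star_eq_adjoint, star_smul]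
  rw [IsSelfAdjA, hstar, ImA, comp_smul, smul_comp, comp_sub, sub_comp, hTs.1,
    hTs.adjoint_comp_eq hA, neg_smul, ← smul_neg, neg_sub]

lemma inner_reA_apply (hA : A.IsPositive) (hTs : IsReducedAdjA A T Ts) (x : H) :
    inner ℂ (A (ReA T Ts x)) x = (inner ℂ (A (T x)) x).re := by
  rw [ReA, smul_apply, map_smul, inner_smul_left, add_apply, map_add, inner_add_left,
    hTs.inner_apply hA, Complex.re_eq_add_conj]
  simp [div_eq_inv_mul, map_ofNat]

lemma inner_imA_apply (hA : A.IsPositive) (hTs : IsReducedAdjA A T Ts) (x : H) :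
    inner ℂ (A (ImA T Ts x)) x = -(inner ℂ (A (T x)) x).im := by
  rw [ImA, smul_apply, map_smul, inner_smul_left, sub_apply, map_sub, inner_sub_left,
    hTs.inner_apply hA, Complex.im_eq_sub_conj]
  simp [div_eq_inv_mul, map_ofNat]

lemma vnA_apply_le (hA : A.IsPositive) (hTs : IsReducedAdjA A T Ts) (x : H) :
    vnA A (T x) ≤ (‖ReA T Ts‖ + ‖ImA T Ts‖) * vnA A x := by
  conv_lhs => rw [← reA_add_I_smul_imA T Ts]
  calc vnA A ((ReA T Ts + Complex.I • ImA T Ts) x)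
      ≤ vnA A (ReA T Ts x) + vnA A (ImA T Ts x) := by
        simpa [vnA_smul hA] using vnA_add_le hA (ReA T Ts x) (Complex.I • ImA T Ts x)
    _ ≤ ‖ReA T Ts‖ * vnA A x + ‖ImA T Ts‖ * vnA A x :=
        add_le_add ((hTs.isSelfAdjA_reA hA).vnA_apply_le hA x)
          ((hTs.isSelfAdjA_imA hA).vnA_apply_le hA x)
    _ = (‖ReA T Ts‖ + ‖ImA T Ts‖) * vnA A x := by ring

lemma wA_reA_le (hA : A.IsPositive) (hTs : IsReducedAdjA A T Ts) : wA A (ReA T Ts) ≤ wA A T :=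
  wA_le_wA_of_norm_inner_le hA (hTs.vnA_apply_le hA) fun x => by
    simpa [hTs.inner_reA_apply hA] using Complex.abs_re_le_norm _

lemma wA_imA_le (hA : A.IsPositive) (hTs : IsReducedAdjA A T Ts) : wA A (ImA T Ts) ≤ wA A T :=
  wA_le_wA_of_norm_inner_le hA (hTs.vnA_apply_le hA) fun x => by
    simpa [hTs.inner_imA_apply hA] using Complex.abs_im_le_norm _

lemma opnA_comp_add_comp_le (hA : A.IsPositive) (hTs : IsReducedAdjA A T Ts) :
    opnA A (Ts ∘L T + T ∘L Ts) ≤ 2 * (opnA A (ReA T Ts) ^ 2 + opnA A (ImA T Ts) ^ 2) := by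
  set P := ReA T Ts
  set Q := ImA T Ts
  have hP := vnA_apply_le_opnA_mul hA ((hTs.isSelfAdjA_reA hA).vnA_apply_le hA)
  have hQ := vnA_apply_le_opnA_mul hA ((hTs.isSelfAdjA_imA hA).vnA_apply_le hA)
  have hP2 (x : H) : vnA A (P (P x)) ≤ opnA A P * (opnA A P * vnA A x) :=
    (hP _).trans (mul_le_mul_of_nonneg_left (hP x) (opnA_nonneg A P))
  have hQ2 (x : H) : vnA A (Q (Q x)) ≤ opnA A Q * (opnA A Q * vnA A x) :=
    (hQ _).trans (mul_le_mul_of_nonneg_left (hQ x) (opnA_nonneg A Q))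
  rw [comp_add_comp_eq_two_smul]
  refine opnA_le (fun x hx => ?_) (by positivity)
  calc vnA A (((2 : ℂ) • (P ∘L P + Q ∘L Q)) x) = 2 * vnA A (P (P x) + Q (Q x)) := by
        rw [smul_apply, vnA_smul hA, Complex.norm_two]; rfl
    _ ≤ 2 * (vnA A (P (P x)) + vnA A (Q (Q x))) := by gcongr; exact vnA_add_le hA _ _
    _ ≤ 2 * (opnA A P * (opnA A P * vnA A x) + opnA A Q * (opnA A Q * vnA A x)) := by
        gcongr <;> apply_assumption
    _ = 2 * (opnA A P ^ 2 + opnA A Q ^ 2) := by rw [hx]; ring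

end IsReducedAdjA

theorem stmt0_general (A T Ts : H →L[ℂ] H) (hA : A.IsPositive)
    (hTs : IsReducedAdjA A T Ts) :
    (1/2) * Real.sqrt (opnA A (Ts ∘L T + T ∘L Ts)) ≤ (Real.sqrt 2 / 2) * Real.sqrt ((opnA A (ReA T Ts))^2 + (opnA A (ImA T Ts))^2) ∧
    (Real.sqrt 2 / 2) * Real.sqrt ((opnA A (ReA T Ts))^2 + (opnA A (ImA T Ts))^2) ≤ wA A T := by
  have hRe : opnA A (ReA T Ts) ≤ wA A T :=
    ((hTs.isSelfAdjA_reA hA).opnA_le_wA hA).trans (hTs.wA_reA_le hA)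
  have hIm : opnA A (ImA T Ts) ≤ wA A T :=
    ((hTs.isSelfAdjA_imA hA).opnA_le_wA hA).trans (hTs.wA_imA_le hA)
  exact ⟨half_mul_sqrt_le_of_le_two_mul (hTs.opnA_comp_add_comp_le hA),
    sqrt_two_div_two_mul_sqrt_sq_add_sq_le (opnA_nonneg A _) (opnA_nonneg A _) hRe hIm⟩

theorem stmt0 (A T Ts : H →L[ℂ] H) (hA : A.IsPositive) (hA0 : A ≠ 0)
    (hTs : IsReducedAdjA A T Ts) :
    (1/2) * Real.sqrt (opnA A (Ts ∘L T + T ∘L Ts)) ≤ (Real.sqrt 2 / 2) * Real.sqrt ((opnA A (ReA T Ts))^2 + (opnA A (ImA T Ts))^2) ∧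
    (Real.sqrt 2 / 2) * Real.sqrt ((opnA A (ReA T Ts))^2 + (opnA A (ImA T Ts))^2) ≤ wA A T :=
  stmt0_general A T Ts hA hTs
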